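/- arXiv:1303.1393 — 6 statements merged into one kernel-verified Lean document; each statement's English description precedes it below -/
import Mathlib

section
/- Let A be a partially ordered set. Then every nonempty directed subset of A has a least upper bound in A if and only if every nonempty chain in A has a least upper bound in A. -/
/-!
Chains are directed, so one direction is immediate. For the converse (Iwamura's lemma) induct on
the cardinality of a directed set `D`. A countable `D` has a cofinal increasing sequence, whose
supremum is that of `D`. If `D` is uncountable, enumerate it by its initial ordinal and close each
initial segment under a choice of upper bounds in `D`: this writes `D` as the union of an increasing
chain of directed subsets of smaller cardinality. By induction these have suprema, which form a
chain, and the supremum of that chain is the supremum of `D`.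
-/

open Set Cardinal

section Image2Closure

variable {α : Type*} (g : α → α → α)

def adjoinImage2 (T : Set α) : Set α := T ∪ image2 g T T

def image2Closure (S : Set α) : Set α := ⋃ n : ℕ, (adjoinImage2 g)^[n] S

variable {g} {S T : Set α}

lemma subset_adjoinImage2 (T : Set α) : T ⊆ adjoinImage2 g T := subset_union_left

lemma adjoinImage2_mono : Monotone (adjoinImage2 g) :=
  fun _ _ h => union_subset_union h (image2_subset h h)

lemma mk_adjoinImage2_le {c : Cardinal} (hc : ℵ₀ ≤ c) (hT : #T ≤ c) : #(adjoinImage2 g T) ≤ c :=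
  calc #(adjoinImage2 g T) ≤ #T + #(image2 g T T) := mk_union_le _ _
    _ ≤ c + c * c := add_le_add hT (mk_image2_le.trans (mul_le_mul' hT hT))
    _ = c := by rw [mul_eq_self hc, add_eq_self hc]

lemma subset_image2Closure (S : Set α) : S ⊆ image2Closure g S :=
  subset_iUnion_of_subset 0 subset_rfl

lemma image2Closure_mono : Monotone (image2Closure g) :=
  fun _ _ h => iUnion_mono fun n => adjoinImage2_mono.iterate n h

lemma apply_mem_image2Closure {a b : α} (ha : a ∈ image2Closure g S) (hb : b ∈ image2Closure g S) :
    g a b ∈ image2Closure g S := by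
  obtain ⟨m, ham⟩ := mem_iUnion.1 ha
  obtain ⟨n, hbn⟩ := mem_iUnion.1 hb
  have hiter := adjoinImage2_mono.monotone_iterate_of_le_map (subset_adjoinImage2 (g := g) S)
  refine mem_iUnion.2 ⟨max m n + 1, ?_⟩
  rw [Function.iterate_succ_apply']
  exact Or.inr (mem_image2_of_mem (hiter (le_max_left m n) ham) (hiter (le_max_right m n) hbn))

lemma image2Closure_subset (hST : S ⊆ T) (hT : ∀ a ∈ T, ∀ b ∈ T, g a b ∈ T) :
    image2Closure g S ⊆ T := by
  refine iUnion_subset fun n => ?_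
  induction n with
  | zero => exact hST
  | succ n ih =>
    rw [Function.iterate_succ_apply']
    rintro x (hx | ⟨a, ha, b, hb, rfl⟩)
    exacts [ih hx, hT a (ih ha) b (ih hb)]

lemma mk_image2Closure_le (S : Set α) : #(image2Closure g S) ≤ max #S ℵ₀ := by
  have hc : ℵ₀ ≤ max #S ℵ₀ := le_max_right _ _
  have hiter : ∀ n, #((adjoinImage2 g)^[n] S) ≤ max #S ℵ₀ := by
    intro n
    induction n with
    | zero => exact le_max_left _ _
    | succ n ih =>
      rw [Function.iterate_succ_apply']
      exact mk_adjoinImage2_le hc ih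
  have := mk_iUnion_le_lift (fun n : ℕ => (adjoinImage2 g)^[n] S)
  simp only [lift_uzero, mk_nat, lift_aleph0] at this
  exact this.trans ((mul_le_mul' hc (ciSup_le' hiter)).trans (mul_eq_self hc).le)

end Image2Closure

section Directed

variable {α : Type*} {r : α → α → Prop} {g : α → α → α} {D S : Set α}

lemma directedOn_image2Closure (hg : ∀ a ∈ D, ∀ b ∈ D, g a b ∈ D ∧ r a (g a b) ∧ r b (g a b))
    (hSD : S ⊆ D) : DirectedOn r (image2Closure g S) := by
  have hD : image2Closure g S ⊆ D := image2Closure_subset hSD fun a ha b hb => (hg a ha b hb).1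
  intro a ha b hb
  obtain ⟨-, hab, hba⟩ := hg a (hD ha) b (hD hb)
  exact ⟨g a b, apply_mem_image2Closure ha hb, hab, hba⟩

lemma DirectedOn.exists_monotone_iUnion_eq (hD : DirectedOn r D) (hκ : ℵ₀ < #D) :
    ∃ T : (#D).ord.ToType → Set α, Monotone T ∧ ⋃ i, T i = D ∧
      ∀ i, (T i).Nonempty ∧ DirectedOn r (T i) ∧ #(T i) < #D := by
  choose! g hg using hD
  obtain ⟨e⟩ : Nonempty ((#D).ord.ToType ≃ D) := by rw [← Cardinal.eq, mk_ord_toType]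
  set T : (#D).ord.ToType → Set α := fun i => image2Closure g ((fun j => (e j : α)) '' Iic i)
  have hSD : ∀ i, (fun j => (e j : α)) '' Iic i ⊆ D := by
    rintro i _ ⟨j, -, rfl⟩
    exact (e j).2
  have hTD : ∀ i, T i ⊆ D := fun i =>
    image2Closure_subset (hSD i) fun a ha b hb => (hg a ha b hb).1
  have hmem : ∀ i, (e i : α) ∈ T i := fun i =>
    subset_image2Closure _ ⟨i, mem_Iic.2 le_rfl, rfl⟩
  refine ⟨T, fun i j h => image2Closure_mono (image_mono (Iic_subset_Iic.2 h)), ?_,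
    fun i => ⟨⟨_, hmem i⟩, directedOn_image2Closure hg (hSD i), ?_⟩⟩
  · refine (iUnion_subset hTD).antisymm fun d hd => mem_iUnion.2 ⟨e.symm ⟨d, hd⟩, ?_⟩
    simpa using hmem (e.symm ⟨d, hd⟩)
  · refine (mk_image2Closure_le _).trans_lt (max_lt (mk_image_le.trans_lt ?_) hκ)
    rw [← Iio_insert]
    exact mk_insert_le.trans_lt (add_one_lt_of_lt hκ.le (by simpa using mk_Iio_lt i))

variable [Preorder α]

lemma DirectedOn.exists_monotone_isCofinalFor (hD : DirectedOn (· ≤ ·) D) (hc : D.Countable)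
    (hne : D.Nonempty) : ∃ u : ℕ → α, Monotone u ∧ range u ⊆ D ∧ IsCofinalFor D (range u) := by
  have := hc.toEncodable
  have : Inhabited D := ⟨⟨_, hne.some_mem⟩⟩
  have hdir := hD.directed_val
  refine ⟨Subtype.val ∘ hdir.sequence Subtype.val, hdir.sequence_mono, ?_, fun d hd => ?_⟩
  · rintro _ ⟨n, rfl⟩
    exact Subtype.prop _
  · exact ⟨_, mem_range_self (Encodable.encode (⟨d, hd⟩ : D) + 1), hdir.le_sequence ⟨d, hd⟩⟩

theorem DirectedOn.exists_isLUB_of_isChain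
    (hC : ∀ C : Set α, C.Nonempty → IsChain (· ≤ ·) C → ∃ a : α, IsLUB C a)
    (hD : DirectedOn (· ≤ ·) D) (hne : D.Nonempty) : ∃ a : α, IsLUB D a := by
  induction hDκ : #D using WellFoundedLT.induction generalizing D with
  | _ κ IH =>
    rcases le_or_gt #D ℵ₀ with hcount | hκ
    · obtain ⟨u, hu, huD, hcof⟩ :=
        hD.exists_monotone_isCofinalFor (le_aleph0_iff_set_countable.1 hcount) hne
      obtain ⟨t, ht⟩ := hC _ (range_nonempty u) hu.isChain_range
      exact ⟨t, (isLUB_congr ((upperBounds_mono_of_isCofinalFor hcof).antisymm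
        (upperBounds_mono_set huD))).1 ht⟩
    · obtain ⟨T, hT, hTD, hTdir⟩ := hD.exists_monotone_iUnion_eq hκ
      choose s hs using fun i => IH _ (hDκ ▸ (hTdir i).2.2) (hTdir i).2.1 (hTdir i).1 rfl
      have : Nonempty (#D).ord.ToType := nonempty_ord_toType (mk_ne_zero_iff.2 hne.to_subtype)
      have hs_mono : Monotone s := fun i j h => (hs i).mono (hs j) (hT h)
      obtain ⟨t, ht⟩ := hC _ (range_nonempty s) hs_mono.isChain_range
      exact ⟨t, hTD ▸ (isLUB_iUnion_iff_of_isLUB hs t).1 ht⟩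

end Directed

/-- In a partially ordered set `A`, every nonempty directed subset has a least upper bound
if and only if every nonempty chain has a least upper bound. -/
theorem stmt_0 {A : Type*} [PartialOrder A] :
    (∀ D : Set A, D.Nonempty → DirectedOn (· ≤ ·) D → ∃ a : A, IsLUB D a) ↔
      (∀ C : Set A, C.Nonempty → IsChain (· ≤ ·) C → ∃ a : A, IsLUB C a) :=
  ⟨fun h C hne hC => h C hne hC.directedOn, fun h _ hne hD => hD.exists_isLUB_of_isChain h hne⟩
end

section
/- With the divisor topology, X_S is a T0 topological space but not a T1 topological space. -/
/-- The supernatural (Steinitz) numbers other than 1, modeled as functions from the primes to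
`ℕ∞ = ℕ ∪ {∞}` that are not identically zero. -/
def Supernatural : Type := {f : Nat.Primes → ℕ∞ // f ≠ 0}

/-- The divisor topology on the supernatural numbers (other than 1), generated by the sets
`U(g) = {h : h ≼ g}` where `≼` is the pointwise order (divisibility of supernatural numbers). -/
def supernaturalTopology : TopologicalSpace Supernatural :=
  TopologicalSpace.generateFrom
    {U : Set Supernatural |
      ∃ g : Supernatural, U = {h : Supernatural | ∀ p : Nat.Primes, h.1 p ≤ g.1 p}}

lemma supernatural_open_lower {U : Set Supernatural}
    (hU : @IsOpen Supernatural supernaturalTopology U) :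
    ∀ x y : Supernatural, (∀ p, x.1 p ≤ y.1 p) → y ∈ U → x ∈ U := by
  induction hU with
  | basic V hV =>
    rintro x y hxy hyV
    obtain ⟨g, rfl⟩ := hV
    intro p
    exact le_trans (hxy p) (hyV p)
  | univ => intro x y _ _; trivial
  | inter V W _ _ ihV ihW =>
    rintro x y hxy ⟨hyV, hyW⟩
    exact ⟨ihV x y hxy hyV, ihW x y hxy hyW⟩
  | sUnion S _ ih =>
    rintro x y hxy ⟨V, hVS, hyV⟩
    exact ⟨V, hVS, ih V hVS x y hxy hyV⟩

lemma basic_open (g : Supernatural) :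
    @IsOpen Supernatural supernaturalTopology {h : Supernatural | ∀ p, h.1 p ≤ g.1 p} :=
  TopologicalSpace.GenerateOpen.basic _ ⟨g, rfl⟩

/-- With the divisor topology, the supernatural numbers (other than 1) form a `T₀` topological
space but not a `T₁` topological space. -/
theorem stmt_3 :
    @T0Space Supernatural supernaturalTopology ∧ ¬ @T1Space Supernatural supernaturalTopology := by
  letI := supernaturalTopology
  constructor
  · refine ⟨fun {x y} h => ?_⟩
    have hx : y ∈ {h : Supernatural | ∀ p, h.1 p ≤ x.1 p} :=
      (h.mem_open_iff (basic_open x)).mp (fun p => le_refl _)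
    have hy : x ∈ {h : Supernatural | ∀ p, h.1 p ≤ y.1 p} :=
      (h.mem_open_iff (basic_open y)).mpr (fun p => le_refl _)
    exact Subtype.ext (funext fun p => le_antisymm (hy p) (hx p))
  · intro hT1
    set two : Nat.Primes := ⟨2, Nat.prime_two⟩
    set x : Supernatural := ⟨fun p => if p = two then 1 else 0, by
      intro h
      have := congrFun h two
      simp at this⟩
    set y : Supernatural := ⟨fun p => if p = two then 2 else 0, by
      intro h
      have := congrFun h two
      simp at this⟩
    have hxy : x ≠ y := by
      intro h
      have := congrFun (congrArg Subtype.val h) two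
      simp [x, y] at this
    have hle : ∀ p, x.1 p ≤ y.1 p := by
      intro p
      by_cases hp : p = two <;> simp [x, y, hp]
    have hopen : IsOpen {x}ᶜ := (hT1.t1 x).isOpen_compl
    have hy_mem : y ∈ ({x}ᶜ : Set Supernatural) := by
      simp [Set.mem_compl_iff, Ne.symm hxy]
    have := supernatural_open_lower hopen x y hle hy_mem
    exact this rfl
end

section
/- With the divisor topology, X_S is a compact topological space. -/
/-! The supernatural number `∏ p^∞` is divisible by everything, so the only open set containing
it is the whole space; hence every open cover has `univ` as a member. -/

open Filter Set Topology

theorem TopologicalSpace.nhds_generateFrom_eq_top {X : Type*} {g : Set (Set X)} {x : X}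
    (h : ∀ s ∈ g, x ∈ s → s = univ) : @nhds X (generateFrom g) x = ⊤ := by
  rw [nhds_generateFrom]
  refine le_antisymm le_top (le_iInf₂ fun s ⟨hxs, hsg⟩ => ?_)
  simp [h s hsg hxs]

theorem CompactSpace.of_nhds_eq_top {X : Type*} [TopologicalSpace X] {x : X} (hx : 𝓝 x = ⊤) :
    CompactSpace X :=
  ⟨isCompact_iff_ultrafilter_le_nhds.2 fun _ _ => ⟨x, mem_univ x, hx ▸ le_top⟩⟩

namespace Supernatural

instance : Top Supernatural :=
  ⟨⟨fun _ => ⊤, fun h => ENat.top_ne_zero (congrFun h ⟨2, Nat.prime_two⟩)⟩⟩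

theorem eq_top_of_top_le {g : Supernatural}
    (hg : ∀ p : Nat.Primes, (⊤ : Supernatural).1 p ≤ g.1 p) : g = ⊤ :=
  Subtype.ext <| funext fun p => top_le_iff.1 (hg p)

end Supernatural

/-- With the divisor topology, the supernatural numbers (other than 1) form a compact
topological space. -/
theorem stmt_4 : @CompactSpace Supernatural supernaturalTopology := by
  let _ := supernaturalTopology
  refine CompactSpace.of_nhds_eq_top (x := (⊤ : Supernatural))
    (TopologicalSpace.nhds_generateFrom_eq_top ?_)
  rintro _ ⟨g, rfl⟩ hg
  rw [Supernatural.eq_top_of_top_le hg]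
  exact eq_univ_of_forall fun _ _ => le_top
end

section
/- Let n ∈ ℤ and let f : ℚ_p → ℂ be μ-integrable and locally constant with degree n, i.e. f(x + a) = f(x) for all x ∈ ℚ_p whenever ‖a‖_p ≤ p^{−n}. Then the Fourier transform of f has compact support with degree n: for every y ∈ ℚ_p with ‖y‖_p > p^n, ∫ χ(−x·y)·f(x) dμ(x) = 0. -/
open MeasureTheory

/-! Translating by `a = p^n` leaves `f` unchanged but multiplies the integrand `χ(-xy) f(x)`
by the constant `χ(-ay)`, which differs from `1` because `‖ay‖ > 1`. An integral over a
translation-invariant measure that is multiplied by a constant other than `1` must vanish. -/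

theorem integral_eq_zero_of_add_right_eq_smul {G 𝕜 E : Type*} [MeasurableSpace G] [AddGroup G]
    [MeasurableAdd G] [NontriviallyNormedField 𝕜] [NormedAddCommGroup E] [NormedSpace ℝ E]
    [NormedSpace 𝕜 E] [SMulCommClass ℝ 𝕜 E] {μ : Measure G} [μ.IsAddRightInvariant]
    {g : G → E} {a : G} {c : 𝕜} (hc : c ≠ 1) (hg : ∀ x, g (x + a) = c • g x) :
    ∫ x, g x ∂μ = 0 := by
  have hfix : c • ∫ x, g x ∂μ = ∫ x, g x ∂μ := by
    simp_rw [← integral_smul, ← hg, integral_add_right_eq_self]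
  have hzero : (c - 1) • ∫ x, g x ∂μ = 0 := by rw [sub_smul, one_smul, hfix, sub_self]
  exact (smul_eq_zero.mp hzero).resolve_left (sub_ne_zero.mpr hc)

theorem Padic.one_lt_norm_p_zpow_mul {p : ℕ} [Fact p.Prime] {n : ℤ} {y : ℚ_[p]}
    (hy : (p : ℝ) ^ n < ‖y‖) : 1 < ‖(p : ℚ_[p]) ^ n * y‖ := by
  have hp : (0 : ℝ) < p := by exact_mod_cast (Fact.out : p.Prime).pos
  rw [norm_mul, Padic.norm_p_zpow, zpow_neg, ← div_eq_inv_mul, one_lt_div (zpow_pos hp n)]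
  exact hy

theorem stmt_6_general (p : ℕ) [Fact p.Prime] [MeasurableSpace ℚ_[p]] [BorelSpace ℚ_[p]]
    (μ : Measure ℚ_[p]) [μ.IsAddHaarMeasure]
    (χ : ℚ_[p] → ℂ)
    (hχadd : ∀ x y : ℚ_[p], χ (x + y) = χ x * χ y)
    (hχker : ∀ x : ℚ_[p], χ x = 1 ↔ ‖x‖ ≤ 1)
    (n : ℤ) (f : ℚ_[p] → ℂ)
    (hlc : ∀ x a : ℚ_[p], ‖a‖ ≤ (p : ℝ) ^ (-n) → f (x + a) = f x) :
    ∀ y : ℚ_[p], (p : ℝ) ^ n < ‖y‖ → ∫ x, χ (-(x * y)) * f x ∂μ = 0 := by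
  intro y hy
  set a : ℚ_[p] := (p : ℚ_[p]) ^ n
  have hχa : χ (-(a * y)) ≠ 1 := by
    rw [Ne, hχker, norm_neg, not_le]
    exact Padic.one_lt_norm_p_zpow_mul hy
  refine integral_eq_zero_of_add_right_eq_smul (a := a) hχa fun x => ?_
  rw [hlc x a (Padic.norm_p_zpow n).le, add_mul, neg_add, hχadd, smul_eq_mul]
  ring

/-- If `f : ℚ_p → ℂ` is integrable and locally constant with degree `n`
(i.e. `f (x + a) = f x` whenever `‖a‖_p ≤ p^(-n)`), then its Fourier transform has
compact support with degree `n`: it vanishes at every `y` with `‖y‖_p > p^n`.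
Here `χ` is a continuous additive character of `ℚ_p` whose kernel is exactly `ℤ_p`,
and `μ` is an additive Haar measure on `ℚ_p`. -/
theorem stmt_6 (p : ℕ) [Fact p.Prime] [MeasurableSpace ℚ_[p]] [BorelSpace ℚ_[p]]
    (μ : Measure ℚ_[p]) [μ.IsAddHaarMeasure]
    (χ : ℚ_[p] → ℂ) (hχcont : Continuous χ)
    (hχadd : ∀ x y : ℚ_[p], χ (x + y) = χ x * χ y) (hχzero : χ 0 = 1)
    (hχker : ∀ x : ℚ_[p], χ x = 1 ↔ ‖x‖ ≤ 1)
    (n : ℤ) (f : ℚ_[p] → ℂ) (hf : Integrable f μ)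
    (hlc : ∀ x a : ℚ_[p], ‖a‖ ≤ (p : ℝ) ^ (-n) → f (x + a) = f x) :
    ∀ y : ℚ_[p], (p : ℝ) ^ n < ‖y‖ → ∫ x, χ (-(x * y)) * f x ∂μ = 0 :=
  stmt_6_general p μ χ hχadd hχker n f hlc
end

section
/- Let k ∈ ℤ and let f : ℚ_p → ℂ be μ-integrable with compact support with degree k, i.e. f(x) = 0 whenever ‖x‖_p > p^k. Define the Fourier transform f̂(y) = ∫ χ(−x·y)·f(x) dμ(x). Then f̂ is locally constant with degree k: f̂(y + a) = f̂(y) for all y ∈ ℚ_p and all a ∈ ℚ_p with ‖a‖_p ≤ p^{−k}. -/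
open MeasureTheory

/-- If `f : ℚ_p → ℂ` is integrable and has compact support with degree `k`
(i.e. `f x = 0` whenever `‖x‖_p > p^k`), then its Fourier transform
`f̂ (y) = ∫ χ(-x·y) f(x) dμ(x)` is locally constant with degree `k`:
`f̂ (y + a) = f̂ (y)` whenever `‖a‖_p ≤ p^(-k)`.
Here `χ` is a continuous additive character of `ℚ_p` whose kernel is exactly `ℤ_p`,
and `μ` is an additive Haar measure on `ℚ_p`. -/
theorem stmt_7 (p : ℕ) [Fact p.Prime] [MeasurableSpace ℚ_[p]] [BorelSpace ℚ_[p]]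
    (μ : Measure ℚ_[p]) [μ.IsAddHaarMeasure]
    (χ : ℚ_[p] → ℂ) (hχcont : Continuous χ)
    (hχadd : ∀ x y : ℚ_[p], χ (x + y) = χ x * χ y) (hχzero : χ 0 = 1)
    (hχker : ∀ x : ℚ_[p], χ x = 1 ↔ ‖x‖ ≤ 1)
    (k : ℤ) (f : ℚ_[p] → ℂ) (hf : Integrable f μ)
    (hcs : ∀ x : ℚ_[p], (p : ℝ) ^ k < ‖x‖ → f x = 0) :
    ∀ y a : ℚ_[p], ‖a‖ ≤ (p : ℝ) ^ (-k) →
      ∫ x, χ (-(x * (y + a))) * f x ∂μ = ∫ x, χ (-(x * y)) * f x ∂μ := by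
  intro y a ha
  have key : ∀ x : ℚ_[p], χ (-(x * (y + a))) * f x = χ (-(x * y)) * f x := by
    intro x
    by_cases h : (p : ℝ) ^ k < ‖x‖
    · simp [hcs x h]
    · push_neg at h
      have hxa : ‖-(x * a)‖ ≤ 1 := by
        rw [norm_neg, norm_mul]
        calc ‖x‖ * ‖a‖ ≤ (p : ℝ) ^ k * (p : ℝ) ^ (-k) :=
              mul_le_mul h ha (norm_nonneg _) (by positivity)
          _ = 1 := by
              rw [← zpow_add₀ (by exact_mod_cast (Fact.out : p.Prime).pos.ne' : (p : ℝ) ≠ 0)]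
              simp
      have h1 : χ (-(x * a)) = 1 := (hχker _).2 hxa
      have h2 : χ (-(x * (y + a))) = χ (-(x * y)) := by
        rw [mul_add, neg_add, hχadd, h1, mul_one]
      rw [h2]
  simp_rw [key]
end

section
/- For all μ, ν ∈ ℕ, the rational number μ·ν/n − Σ_p ((μ mod p^{e_p}) · ((ν·t_p) mod p^{e_p})) / p^{e_p}, where the sum runs over the prime divisors p of n, is an integer. (Equivalently, Good's factorization of characters holds: e^{2πi·μν/n} = Π_p e^{2πi·(μ mod p^{e_p})·((ν t_p) mod p^{e_p})/p^{e_p}}.) -/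
/-!
Write `q_p = p ^ e_p` and `u_p = n / q_p`. Since `q_p ∣ u_r` for `r ≠ p`, the sum
`S = Σ_p t_p u_p` is `≡ 1` modulo every `q_p`, hence modulo `n = Π_p q_p`. As `u_p / n = 1 / q_p`,
`μν/n - Σ_p μν t_p / q_p = μν (1 - S) / n` is an integer, and each `μν t_p / q_p` differs from
`(μ mod q_p)((ν t_p) mod q_p) / q_p` by an integer because the numerators agree modulo `q_p`.
-/

open Finset

namespace Nat

lemma ordProj_dvd_ordCompl_of_ne {n p q : ℕ} (hp : p.Prime) (hq : q.Prime) (hpq : p ≠ q) :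
    p ^ n.factorization p ∣ n / q ^ n.factorization q :=
  dvd_ordCompl_of_dvd_not_dvd (ordProj_dvd n p) fun h =>
    hpq ((prime_dvd_prime_iff_eq hq hp).1 (hq.dvd_of_dvd_pow h)).symm

lemma modEq_of_forall_ordProj_modEq {n a b : ℕ} (hn : n ≠ 0)
    (h : ∀ p ∈ n.primeFactors, a ≡ b [MOD p ^ n.factorization p]) : a ≡ b [MOD n] := by
  rw [prod_primeFactors_pow_factorization hn, modEq_iff_dvd, Nat.cast_prod]
  refine prod_dvd_of_coprime (fun p hp q hq hpq => ?_) fun p hp => modEq_iff_dvd.1 (h p hp)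
  exact isCoprime_iff_coprime.2 <| coprime_pow_primes _ _
    (prime_of_mem_primeFactors hp) (prime_of_mem_primeFactors hq) hpq

lemma sum_mul_ordCompl_modEq_one {n : ℕ} (hn : n ≠ 0) {t : ℕ → ℕ}
    (ht : ∀ p ∈ n.primeFactors,
      t p * (n / p ^ n.factorization p) ≡ 1 [MOD p ^ n.factorization p]) :
    ∑ p ∈ n.primeFactors, t p * (n / p ^ n.factorization p) ≡ 1 [MOD n] := by
  refine modEq_of_forall_ordProj_modEq hn fun p hp => ?_
  have hp' := prime_of_mem_primeFactors hp
  have other_terms : ∑ q ∈ n.primeFactors.erase p, t q * (n / q ^ n.factorization q)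
      ≡ 0 [MOD p ^ n.factorization p] :=
    modEq_zero_iff_dvd.2 <| dvd_sum fun q hq => dvd_mul_of_dvd_right
      (ordProj_dvd_ordCompl_of_ne hp' (prime_of_mem_primeFactors (mem_of_mem_erase hq))
        (ne_of_mem_erase hq).symm) _
  rw [← add_sum_erase _ _ hp]
  simpa using (ht p hp).add other_terms

end Nat

lemma Nat.ModEq.div_sub_div_mem_intRange {q a b : ℕ} (h : a ≡ b [MOD q]) :
    (a : ℚ) / q - b / q ∈ (Int.castRingHom ℚ).range := by
  obtain rfl | hq := eq_or_ne q 0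
  · simp
  obtain ⟨k, hk⟩ := Nat.modEq_iff_dvd.1 h.symm
  refine ⟨k, ?_⟩
  rw [eq_intCast, eq_comm, div_sub_div_same, div_eq_iff (by exact_mod_cast hq)]
  exact_mod_cast hk.trans (mul_comm _ _)

lemma div_sub_sum_div_ordProj_mem_intRange {n : ℕ} (hn : n ≠ 0) {t : ℕ → ℕ}
    (ht : ∀ p ∈ n.primeFactors,
      t p * (n / p ^ n.factorization p) ≡ 1 [MOD p ^ n.factorization p]) (x : ℕ) :
    (x : ℚ) / n - ∑ p ∈ n.primeFactors,
      ((x * t p : ℕ) : ℚ) / ((p ^ n.factorization p : ℕ) : ℚ) ∈ (Int.castRingHom ℚ).range := by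
  have hnQ : (n : ℚ) ≠ 0 := by exact_mod_cast hn
  have hterm : ∀ p ∈ n.primeFactors, ((x * t p : ℕ) : ℚ) / ((p ^ n.factorization p : ℕ) : ℚ) =
      x * ((t p * (n / p ^ n.factorization p) : ℕ) : ℚ) / n := by
    intro p hp
    have hq : ((p ^ n.factorization p : ℕ) : ℚ) ≠ 0 := by
      exact_mod_cast (pow_pos (Nat.prime_of_mem_primeFactors hp).pos _).ne'
    rw [Nat.cast_mul, Nat.cast_mul, Nat.cast_div (Nat.ordProj_dvd n p) hq]
    field_simp
  obtain ⟨k, hk⟩ := Nat.modEq_iff_dvd.1 (Nat.sum_mul_ordCompl_modEq_one hn ht)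
  have hkQ : 1 - ((∑ p ∈ n.primeFactors, t p * (n / p ^ n.factorization p) : ℕ) : ℚ) = n * k := by
    exact_mod_cast hk
  refine ⟨x * k, ?_⟩
  rw [sum_congr rfl hterm, ← sum_div, ← mul_sum, ← Nat.cast_sum, div_sub_div_same, ← mul_one_sub,
    hkQ, eq_intCast, eq_div_iff hnQ]
  push_cast
  ring

theorem stmt_15_general (n : ℕ) (t : ℕ → ℕ)
    (ht : ∀ p ∈ n.primeFactors,
      t p * (n / p ^ n.factorization p) ≡ 1 [MOD p ^ n.factorization p]) :
    ∀ μ ν : ℕ, ∃ z : ℤ,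
      ((μ * ν : ℕ) : ℚ) / (n : ℚ) -
          ∑ p ∈ n.primeFactors,
            (((μ % p ^ n.factorization p) * ((ν * t p) % p ^ n.factorization p) : ℕ) : ℚ) /
              ((p ^ n.factorization p : ℕ) : ℚ) = (z : ℚ) := by
  intro μ ν
  obtain rfl | hn := eq_or_ne n 0
  · exact ⟨0, by simp⟩
  suffices h : _ ∈ (Int.castRingHom ℚ).range by
    obtain ⟨z, hz⟩ := h
    exact ⟨z, hz.symm⟩
  rw [← sub_add_sub_cancel _ (∑ p ∈ n.primeFactors,
    ((μ * ν * t p : ℕ) : ℚ) / ((p ^ n.factorization p : ℕ) : ℚ)), ← sum_sub_distrib]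
  refine add_mem (div_sub_sum_div_ordProj_mem_intRange hn ht _) (sum_mem fun p _ => ?_)
  refine Nat.ModEq.div_sub_div_mem_intRange ?_
  rw [mul_assoc]
  exact ((Nat.mod_modEq _ _).mul (Nat.mod_modEq _ _)).symm

/-- Good's factorization of the characters of `ℤ/nℤ`: for all `μ, ν ∈ ℕ`, the rational number
`μν/n − Σ_p ((μ mod p^(e_p)) · ((ν t_p) mod p^(e_p))) / p^(e_p)` (sum over the prime divisors
`p` of `n`, `e_p` the exponent of `p` in `n`, `t_p` an inverse of `u_p = n / p^(e_p)` modulo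
`p^(e_p)`) is an integer; equivalently
`e^{2πi μν/n} = Π_p e^{2πi (μ mod p^(e_p))((ν t_p) mod p^(e_p))/p^(e_p)}`. -/
theorem stmt_15 (n : ℕ) (hn : 2 ≤ n) (t : ℕ → ℕ)
    (ht : ∀ p ∈ n.primeFactors,
      t p * (n / p ^ n.factorization p) ≡ 1 [MOD p ^ n.factorization p]) :
    ∀ μ ν : ℕ, ∃ z : ℤ,
      ((μ * ν : ℕ) : ℚ) / (n : ℚ) -
          ∑ p ∈ n.primeFactors,
            (((μ % p ^ n.factorization p) * ((ν * t p) % p ^ n.factorization p) : ℕ) : ℚ) /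
              ((p ^ n.factorization p : ℕ) : ℚ) = (z : ℚ) :=
  stmt_15_general n t ht
end
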